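/- For an item i = [X → ω₁ ·⁽²⁾ within a permutation phrase with seen-set π₁ and remaining-set π₂], repeated application of the step function on the symbols of any ordering of π₂ reaches the item [X → ω₁ π ·⁽¹⁾ ω₂] where π = π₁ ∪ π₂: i.e., processing the remaining symbols of a permutation phrase in any order completes the phrase. -/

import Mathlib

/-- An LR(0) item: dot position in the segment list and, when inside a
permutation-phrase segment (dot level 2), the set of already-seen symbols. -/
structure PItem (α : Type*) where
  pos : ℕ
  seen : Option (Finset α)

/-- The `step` function: moves the dot on symbol `Y` (partial, `none` = undefined). -/
def stepItem {α : Type*} [DecidableEq α] (ω : List (α ⊕ Finset α))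
    (i : PItem α) (Y : α) : Option (PItem α) :=
  match i.seen with
  | none =>
    match ω[i.pos]? with
    | some (Sum.inl a) => if a = Y then some ⟨i.pos + 1, none⟩ else none
    | some (Sum.inr S) =>
        if Y ∈ S then
          if S = {Y} then some ⟨i.pos + 1, none⟩ else some ⟨i.pos, some {Y}⟩
        else none
    | none => none
  | some s =>
    match ω[i.pos]? with
    | some (Sum.inr S) =>
        if Y ∈ S ∧ Y ∉ s then
          if S = insert Y s then some ⟨i.pos + 1, none⟩
          else some ⟨i.pos, some (insert Y s)⟩
        else none
    | _ => none

/-! Induct on the enumeration, generalizing the seen-set. Each symbol of `π₂` lies in `π` and is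
new, so a step inserts it into the seen-set; the phrase is left exactly when the seen-set fills
`π`, which by disjointness and `Nodup` happens precisely at the last symbol. -/

section PermutationPhrase

variable {α : Type*} [DecidableEq α] {ω : List (α ⊕ Finset α)} {p : ℕ} {π : Finset α}

theorem stepItem_seen_of_mem (hseg : ω[p]? = some (Sum.inr π)) {s : Finset α} {Y : α}
    (hY : Y ∈ π) (hYs : Y ∉ s) :
    stepItem ω ⟨p, some s⟩ Y =
      if π = insert Y s then some ⟨p + 1, none⟩ else some ⟨p, some (insert Y s)⟩ := by
  simp [stepItem, hseg, hY, hYs]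

theorem foldl_stepItem_seen (hseg : ω[p]? = some (Sum.inr π)) :
    ∀ (s : Finset α) (l : List α), l ≠ [] → l.Nodup → Disjoint s l.toFinset →
      s ∪ l.toFinset = π →
      l.foldl (fun oi Y => oi.bind fun i => stepItem ω i Y) (some ⟨p, some s⟩)
        = some ⟨p + 1, none⟩
  | _, [], hne, _, _, _ => absurd rfl hne
  | s, Y :: rest, _, hl, hdisj, hunion => by
    rw [List.nodup_cons] at hl
    rw [List.toFinset_cons, Finset.disjoint_insert_right] at hdisj
    have hY : Y ∈ π := hunion ▸ by simp
    rw [List.foldl_cons, Option.bind_some, stepItem_seen_of_mem hseg hY hdisj.1]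
    split_ifs with hfull
    · obtain rfl : rest = [] := by
        refine List.eq_nil_iff_forall_not_mem.mpr fun z hz => ?_
        have hzπ : z ∈ π := hunion ▸ by simp [hz]
        rw [hfull, Finset.mem_insert] at hzπ
        rcases hzπ with rfl | hzs
        · exact hl.1 hz
        · exact Finset.disjoint_left.mp hdisj.2 hzs (List.mem_toFinset.mpr hz)
      rfl
    · have hrest : rest ≠ [] := by
        rintro rfl
        exact hfull (by rw [← hunion]; simp)
      refine foldl_stepItem_seen hseg (insert Y s) rest hrest hl.2 ?_ ?_
      · exact Finset.disjoint_insert_left.mpr ⟨mt List.mem_toFinset.mp hl.1, hdisj.2⟩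
      · rw [← hunion, List.toFinset_cons, Finset.union_insert, Finset.insert_union]

end PermutationPhrase

theorem stmt_12_general {α : Type*} [DecidableEq α] (ω : List (α ⊕ Finset α)) (p : ℕ)
    (π π₁ π₂ : Finset α) (hseg : ω[p]? = some (Sum.inr π))
    (hunion : π₁ ∪ π₂ = π) (hdisj : Disjoint π₁ π₂)
    (h2 : π₂.Nonempty)
    (l : List α) (hl : l.Nodup) (hlπ : l.toFinset = π₂) :
    l.foldl (fun oi Y => oi.bind fun i => stepItem ω i Y)
        (some (⟨p, some π₁⟩ : PItem α))
      = some (⟨p + 1, none⟩ : PItem α) := by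
  subst hlπ
  have hne : l ≠ [] := by
    rintro rfl
    simp at h2
  exact foldl_stepItem_seen hseg π₁ l hne hl hdisj hunion

/-- Processing the remaining symbols `π₂` of a permutation phrase `π = π₁ ∪ π₂`
in any order (any duplicate-free enumeration `l` of `π₂`) completes the phrase:
folding `step` over `l` from the level-2 item with seen-set `π₁` yields the
level-1 item with the dot just after the permutation-phrase segment. -/
theorem stmt_12 {α : Type*} [DecidableEq α] (ω : List (α ⊕ Finset α)) (p : ℕ)
    (π π₁ π₂ : Finset α) (hseg : ω[p]? = some (Sum.inr π))
    (hunion : π₁ ∪ π₂ = π) (hdisj : Disjoint π₁ π₂)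
    (h1 : π₁.Nonempty) (h2 : π₂.Nonempty)
    (l : List α) (hl : l.Nodup) (hlπ : l.toFinset = π₂) :
    l.foldl (fun oi Y => oi.bind fun i => stepItem ω i Y)
        (some (⟨p, some π₁⟩ : PItem α))
      = some (⟨p + 1, none⟩ : PItem α) :=
  stmt_12_general ω p π π₁ π₂ hseg hunion hdisj h2 l hl hlπ
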